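/- There exists σ̄ > 0 such that for every σ ∈ [0, σ̄], the regular solution v_σ satisfies v_σ(ζ) > 0 for all ζ ≥ 0 and v_σ(ζ) → +∞ as ζ → +∞. -/

import Mathlib

/-!
With `a = 1/(m-2)` the equation reads `(ζ^a v')' = ζ^(a-1) (B ζ^(2a+1) - σ) v`, so a continuous
solution of the Volterra equation `v ζ = 1 + ∫₀^ζ s^(-a) ∫₀^s t^(a-1) (B t^(2a+1) - σ) v t dt ds`
is a regular solution; below `flux = ζ^a v'` and `slope = v'`. The kernel is dominated by the
derivative of `majorant`, so after conjugation by the weight `exp (2 majorant)` the equation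
becomes a contraction (Bielecki's trick).

On an interval `[0, z]` where `majorant ≤ 1/4` the solution stays within `1/3` of `1`, and for
small `σ` the flux at `z` is positive. Beyond `z` the potential `B ζ^(2a+1) - σ` is positive, so
the flux keeps growing as long as `v > 0`; hence `v` increases and never reaches `0`, and
`v' ≥ flux z · ζ^(-a)` with `a < 1` forces `v → ∞`.
-/

open Filter Set

/-- A regular solution of the singular ODE
`-ζ·v'' - v'/(m-2) + B·ζ^{m/(m-2)}·v = σ·v` on `(0,∞)`:
continuously differentiable on `[0,∞)`, twice continuously differentiable on
`(0,∞)`, and normalized by `v 0 = 1`. -/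
def RegSol (m B σ : ℝ) (v : ℝ → ℝ) : Prop :=
  ContDiffOn ℝ 1 v (Set.Ici 0) ∧
  ContDiffOn ℝ 2 v (Set.Ioi 0) ∧
  (∀ ζ : ℝ, 0 < ζ →
    -ζ * deriv (deriv v) ζ - deriv v ζ / (m - 2)
      + B * ζ ^ (m / (m - 2)) * v ζ = σ * v ζ) ∧
  v 0 = 1

open MeasureTheory intervalIntegral Topology
open scoped BoundedContinuousFunction

lemma integral_zero_rpow {c : ℝ} (hc : -1 < c) (x : ℝ) :
    ∫ t in (0 : ℝ)..x, t ^ c = x ^ (c + 1) / (c + 1) := by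
  rw [integral_rpow (Or.inl hc), Real.zero_rpow (by linarith), sub_zero]

lemma tendsto_rpow_neg_mul_integral_rpow_mul {a : ℝ} (ha : 0 < a) {g : ℝ → ℝ}
    (hg : Continuous g) :
    Tendsto (fun s => s ^ (-a) * ∫ t in (0 : ℝ)..s, t ^ (a - 1) * g t) (𝓝[>] 0)
      (𝓝 (g 0 / a)) := by
  rw [Metric.tendsto_nhdsWithin_nhds]
  intro ε hε
  obtain ⟨δ, hδ, hgδ⟩ := Metric.continuousAt_iff.1 hg.continuousAt (a * ε / 2) (by positivity)
  refine ⟨δ, hδ, fun s (hs : 0 < s) hsδ => ?_⟩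
  rw [Real.dist_eq, sub_zero, abs_of_pos hs] at hsδ
  have hpow : IntervalIntegrable (fun t : ℝ => t ^ (a - 1)) volume 0 s :=
    intervalIntegrable_rpow' (by linarith)
  have hsa : s ^ (-a) * s ^ a = 1 := by
    rw [← Real.rpow_add hs, neg_add_cancel, Real.rpow_zero]
  have hdiff : s ^ (-a) * (∫ t in (0 : ℝ)..s, t ^ (a - 1) * g t) - g 0 / a
      = s ^ (-a) * ∫ t in (0 : ℝ)..s, t ^ (a - 1) * (g t - g 0) := by
    simp only [mul_sub]
    rw [integral_sub (hpow.mul_continuousOn hg.continuousOn) (hpow.mul_const _),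
      intervalIntegral.integral_mul_const, integral_zero_rpow (by linarith), sub_add_cancel]
    field_simp
    linear_combination g 0 * hsa
  have hbound : |∫ t in (0 : ℝ)..s, t ^ (a - 1) * (g t - g 0)| ≤ a * ε / 2 * (s ^ a / a) := by
    calc |∫ t in (0 : ℝ)..s, t ^ (a - 1) * (g t - g 0)|
        ≤ ∫ t in (0 : ℝ)..s, |t ^ (a - 1) * (g t - g 0)| := abs_integral_le_integral_abs hs.le
      _ ≤ ∫ t in (0 : ℝ)..s, a * ε / 2 * t ^ (a - 1) := by
          refine integral_mono_on hs.le
            (hpow.mul_continuousOn (hg.sub continuous_const).continuousOn).abs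
            (hpow.const_mul _) fun t ht => ?_
          have htδ : dist t 0 < δ := by
            rw [Real.dist_eq, sub_zero, abs_of_nonneg ht.1]; exact ht.2.trans_lt hsδ
          rw [abs_mul, abs_of_nonneg (Real.rpow_nonneg ht.1 _), mul_comm, ← Real.dist_eq]
          exact mul_le_mul_of_nonneg_right (hgδ htδ).le (Real.rpow_nonneg ht.1 _)
      _ = a * ε / 2 * (s ^ a / a) := by
          rw [intervalIntegral.integral_const_mul, integral_zero_rpow (by linarith),
            sub_add_cancel]
  calc dist (s ^ (-a) * ∫ t in (0 : ℝ)..s, t ^ (a - 1) * g t) (g 0 / a)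
      = s ^ (-a) * |∫ t in (0 : ℝ)..s, t ^ (a - 1) * (g t - g 0)| := by
        rw [Real.dist_eq, hdiff, abs_mul, abs_of_nonneg (Real.rpow_nonneg hs.le _)]
    _ ≤ s ^ (-a) * (a * ε / 2 * (s ^ a / a)) :=
        mul_le_mul_of_nonneg_left hbound (Real.rpow_nonneg hs.le _)
    _ = ε / 2 := by
        field_simp
        linear_combination hsa
    _ < ε := half_lt_self hε

lemma contDiffOn_one_Ici_of_tendsto_deriv {f f' : ℝ → ℝ} {x₀ L : ℝ}
    (hf : ContinuousWithinAt f (Ici x₀) x₀) (hd : ∀ x, x₀ < x → HasDerivAt f (f' x) x)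
    (hf' : ContinuousOn f' (Ioi x₀)) (hL : Tendsto f' (𝓝[>] x₀) (𝓝 L)) :
    ContDiffOn ℝ 1 f (Ici x₀) := by
  have hderiv : ∀ x ∈ Ioi x₀, derivWithin f (Ici x₀) x = f' x := fun x hx => by
    rw [derivWithin_of_mem_nhds (Ici_mem_nhds hx), (hd x hx).deriv]
  have h₀ : HasDerivWithinAt f L (Ici x₀) x₀ :=
    hasDerivWithinAt_Ici_of_tendsto_deriv (s := Ioi x₀)
      (fun x hx => (hd x hx).differentiableAt.differentiableWithinAt)
      (hf.mono Ioi_subset_Ici_self) self_mem_nhdsWithin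
      (hL.congr' (eventually_nhdsWithin_of_forall fun x hx => (hd x hx).deriv.symm))
  rw [contDiffOn_one_iff_derivWithin (uniqueDiffOn_Ici x₀)]
  refine ⟨fun x hx => ?_, fun x hx => ?_⟩
  · rcases (mem_Ici.1 hx).eq_or_lt with rfl | hx
    · exact h₀.differentiableWithinAt
    · exact (hd x hx).differentiableAt.differentiableWithinAt
  · rcases (mem_Ici.1 hx).eq_or_lt with rfl | hx
    · rw [← Ioi_insert, continuousWithinAt_insert_self, Ioi_insert, ContinuousWithinAt,
        h₀.derivWithin (uniqueDiffOn_Ici _ _ self_mem_Ici)]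
      exact hL.congr' (eventually_nhdsWithin_of_forall fun y hy => (hderiv y hy).symm)
    · refine ((hf'.continuousAt (Ioi_mem_nhds hx)).congr ?_).continuousWithinAt
      filter_upwards [Ioi_mem_nhds hx] with y hy using (hderiv y hy).symm

lemma contDiffOn_two_of_hasDerivAt {f f' f'' : ℝ → ℝ} {s : Set ℝ} (hs : IsOpen s)
    (hf : ∀ x ∈ s, HasDerivAt f (f' x) x) (hf' : ∀ x ∈ s, HasDerivAt f' (f'' x) x)
    (hf'' : ContinuousOn f'' s) : ContDiffOn ℝ 2 f s := by
  have h₁ : ContDiffOn ℝ 1 f' s :=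
    (contDiffOn_one_iff_derivWithin hs.uniqueDiffOn).2
      ⟨fun x hx => (hf' x hx).differentiableAt.differentiableWithinAt,
        hf''.congr fun x hx => by rw [derivWithin_of_isOpen hs hx, (hf' x hx).deriv]⟩
  rw [← one_add_one_eq_two, contDiffOn_succ_iff_deriv_of_isOpen hs]
  exact ⟨fun x hx => (hf x hx).differentiableAt.differentiableWithinAt, by simp,
    h₁.congr fun x hx => (hf x hx).deriv⟩

lemma pos_of_monotoneOn_while_pos {f : ℝ → ℝ} {z : ℝ} (hf : Continuous f) (hfz : 0 < f z)
    (hmono : ∀ T, z ≤ T → (∀ x ∈ Ico z T, 0 < f x) → MonotoneOn f (Icc z T)) :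
    ∀ x, z ≤ x → 0 < f x := by
  -- `f` would be monotone up to its first zero `T` beyond `z`, so `0 < f z ≤ f T`.
  by_contra! ⟨x₁, hx₁, hfx₁⟩
  set S := Ici z ∩ f ⁻¹' Iic 0
  have hbdd : BddBelow S := ⟨z, fun x hx => hx.1⟩
  have hT : sInf S ∈ S :=
    (isClosed_Ici.inter (isClosed_Iic.preimage hf)).csInf_mem ⟨x₁, hx₁, hfx₁⟩ hbdd
  have hpos : ∀ x ∈ Ico z (sInf S), 0 < f x := fun x hx => by
    by_contra! hfx
    exact (csInf_le hbdd ⟨hx.1, hfx⟩).not_gt hx.2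
  have hzT : z ≤ sInf S := hT.1
  have hle : f z ≤ f (sInf S) := hmono _ hzT hpos ⟨le_rfl, hzT⟩ ⟨hzT, le_rfl⟩ hzT
  linarith [show f (sInf S) ≤ 0 from hT.2]

namespace RegSol

noncomputable section

def fluxDensity (a B σ : ℝ) (v : ℝ → ℝ) (t : ℝ) : ℝ :=
  t ^ (a - 1) * ((B * t ^ (2 * a + 1) - σ) * v t)

def flux (a B σ : ℝ) (v : ℝ → ℝ) (s : ℝ) : ℝ :=
  ∫ t in (0 : ℝ)..s, fluxDensity a B σ v t

def slope (a B σ : ℝ) (v : ℝ → ℝ) (s : ℝ) : ℝ :=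
  s ^ (-a) * flux a B σ v s

def volterra (a B σ : ℝ) (v : ℝ → ℝ) (ζ : ℝ) : ℝ :=
  ∫ s in (0 : ℝ)..ζ, slope a B σ v s

def majorantDeriv (a B σ s : ℝ) : ℝ :=
  B * s ^ (2 * a + 1) / (3 * a + 1) + σ / a

def majorant (a B σ ζ : ℝ) : ℝ :=
  B * ζ ^ (2 * a + 2) / ((3 * a + 1) * (2 * a + 2)) + σ * ζ / a

structure IsVolterraSolution (a B σ : ℝ) (v : ℝ → ℝ) : Prop where
  continuous : Continuous v
  eq_one_add : ∀ ζ, 0 ≤ ζ → v ζ = 1 + volterra a B σ v ζ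

variable {a B σ : ℝ} {v w : ℝ → ℝ}

lemma continuous_potential_mul (ha : 0 < a) (hv : Continuous v) :
    Continuous fun t => (B * t ^ (2 * a + 1) - σ) * v t :=
  ((continuous_const.mul (Real.continuous_rpow_const (by linarith))).sub continuous_const).mul hv

lemma intervalIntegrable_fluxDensity (ha : 0 < a) (hv : Continuous v) (x y : ℝ) :
    IntervalIntegrable (fluxDensity a B σ v) volume x y :=
  (intervalIntegrable_rpow' (by linarith)).mul_continuousOn
    (continuous_potential_mul ha hv).continuousOn

lemma continuousOn_fluxDensity (ha : 0 < a) (hv : Continuous v) :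
    ContinuousOn (fluxDensity a B σ v) (Ioi 0) := fun x hx =>
  ((Real.continuousAt_rpow_const x _ (Or.inl (ne_of_gt hx))).mul
    (continuous_potential_mul ha hv).continuousAt).continuousWithinAt

lemma continuous_flux (ha : 0 < a) (hv : Continuous v) : Continuous (flux a B σ v) :=
  continuous_primitive (intervalIntegrable_fluxDensity ha hv) 0

lemma intervalIntegrable_slope (ha : 0 < a) (ha1 : a < 1) (hv : Continuous v) (x y : ℝ) :
    IntervalIntegrable (slope a B σ v) volume x y :=
  (intervalIntegrable_rpow' (by linarith)).mul_continuousOn (continuous_flux ha hv).continuousOn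

lemma continuousOn_slope (ha : 0 < a) (hv : Continuous v) :
    ContinuousOn (slope a B σ v) (Ioi 0) := fun x hx =>
  ((Real.continuousAt_rpow_const x _ (Or.inl (ne_of_gt hx))).mul
    (continuous_flux ha hv).continuousAt).continuousWithinAt

lemma continuous_volterra (ha : 0 < a) (ha1 : a < 1) (hv : Continuous v) :
    Continuous (volterra a B σ v) :=
  continuous_primitive (intervalIntegrable_slope ha ha1 hv) 0

lemma volterra_sub (ha : 0 < a) (ha1 : a < 1) (hv : Continuous v) (hw : Continuous w) (ζ : ℝ) :
    volterra a B σ (v - w) ζ = volterra a B σ v ζ - volterra a B σ w ζ := by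
  have hflux : ∀ s, flux a B σ (v - w) s = flux a B σ v s - flux a B σ w s := fun s => by
    rw [flux, flux, flux, ← integral_sub (intervalIntegrable_fluxDensity ha hv 0 s)
      (intervalIntegrable_fluxDensity ha hw 0 s)]
    congr 1 with t
    simp only [fluxDensity, Pi.sub_apply]
    ring
  rw [volterra, volterra, volterra, ← integral_sub (intervalIntegrable_slope ha ha1 hv 0 ζ)
    (intervalIntegrable_slope ha ha1 hw 0 ζ)]
  congr 1 with s
  rw [slope, slope, slope, hflux, mul_sub]

lemma hasDerivAt_majorant (ha : 0 < a) (s : ℝ) :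
    HasDerivAt (majorant a B σ) (majorantDeriv a B σ s) s := by
  have hpow := Real.hasDerivAt_rpow_const (x := s) (p := 2 * a + 2) (Or.inr (by linarith))
  have hlin : HasDerivAt (fun ζ : ℝ => σ * ζ / a) (σ / a) s := by
    simpa using ((hasDerivAt_id s).const_mul σ).div_const a
  refine (((hpow.const_mul B).div_const ((3 * a + 1) * (2 * a + 2))).add hlin).congr_deriv ?_
  rw [majorantDeriv, show 2 * a + 2 - 1 = 2 * a + 1 by ring]
  field_simp

lemma continuous_majorant (ha : 0 < a) : Continuous (majorant a B σ) :=
  continuous_iff_continuousAt.2 fun s => (hasDerivAt_majorant ha s).continuousAt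

lemma continuous_majorantDeriv (ha : 0 < a) : Continuous (majorantDeriv a B σ) :=
  ((continuous_const.mul (Real.continuous_rpow_const (by linarith))).div_const _).add
    continuous_const

lemma majorant_zero (ha : 0 < a) : majorant a B σ 0 = 0 := by
  simp [majorant, Real.zero_rpow (by linarith : 2 * a + 2 ≠ 0)]

lemma majorantDeriv_nonneg (ha : 0 < a) (hB : 0 ≤ B) (hσ : 0 ≤ σ) {s : ℝ} (hs : 0 ≤ s) :
    0 ≤ majorantDeriv a B σ s := by
  unfold majorantDeriv
  have := Real.rpow_nonneg hs (2 * a + 1)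
  positivity

lemma monotoneOn_majorant (ha : 0 < a) (hB : 0 ≤ B) (hσ : 0 ≤ σ) :
    MonotoneOn (majorant a B σ) (Ici 0) :=
  monotoneOn_of_deriv_nonneg (convex_Ici 0) (continuous_majorant ha).continuousOn
    (fun s _ => (hasDerivAt_majorant ha s).differentiableAt.differentiableWithinAt)
    fun s hs => by
      rw [interior_Ici] at hs
      rw [(hasDerivAt_majorant ha s).deriv]
      exact majorantDeriv_nonneg ha hB hσ (le_of_lt hs)

lemma majorant_nonneg (ha : 0 < a) (hB : 0 ≤ B) (hσ : 0 ≤ σ) {ζ : ℝ} (hζ : 0 ≤ ζ) :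
    0 ≤ majorant a B σ ζ := by
  simpa [majorant_zero ha] using monotoneOn_majorant ha hB hσ self_mem_Ici hζ hζ

lemma abs_fluxDensity_le (ha : 0 < a) (hB : 0 ≤ B) (hσ : 0 ≤ σ) {t K : ℝ} (ht : 0 ≤ t)
    (hK : |v t| ≤ K) :
    |fluxDensity a B σ v t| ≤ K * (B * t ^ (3 * a) + σ * t ^ (a - 1)) := by
  have hX : 0 ≤ t ^ (a - 1) := Real.rpow_nonneg ht _
  have hP : 0 ≤ t ^ (2 * a + 1) := Real.rpow_nonneg ht _
  have hXP : t ^ (a - 1) * t ^ (2 * a + 1) = t ^ (3 * a) := by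
    rw [← Real.rpow_add' ht (by linarith)]; ring_nf
  have hpot : |B * t ^ (2 * a + 1) - σ| ≤ B * t ^ (2 * a + 1) + σ := by
    refine (abs_sub _ _).trans ?_
    rw [abs_of_nonneg (by positivity), abs_of_nonneg hσ]
  calc |fluxDensity a B σ v t| = t ^ (a - 1) * (|B * t ^ (2 * a + 1) - σ| * |v t|) := by
        rw [fluxDensity, abs_mul, abs_mul, abs_of_nonneg hX]
    _ ≤ t ^ (a - 1) * ((B * t ^ (2 * a + 1) + σ) * K) :=
        mul_le_mul_of_nonneg_left (mul_le_mul hpot hK (abs_nonneg _) (by positivity)) hX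
    _ = K * (B * (t ^ (a - 1) * t ^ (2 * a + 1)) + σ * t ^ (a - 1)) := by ring
    _ = K * (B * t ^ (3 * a) + σ * t ^ (a - 1)) := by rw [hXP]

lemma abs_flux_le (ha : 0 < a) (hB : 0 ≤ B) (hσ : 0 ≤ σ) (hv : Continuous v) {s K : ℝ}
    (hs : 0 ≤ s) (hK : ∀ t ∈ Icc 0 s, |v t| ≤ K) :
    |flux a B σ v s| ≤ K * (B * s ^ (3 * a + 1) / (3 * a + 1) + σ * s ^ a / a) := by
  have hint₁ : IntervalIntegrable (fun t : ℝ => t ^ (3 * a)) volume 0 s :=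
    intervalIntegrable_rpow' (by linarith)
  have hint₂ : IntervalIntegrable (fun t : ℝ => t ^ (a - 1)) volume 0 s :=
    intervalIntegrable_rpow' (by linarith)
  calc |flux a B σ v s| ≤ ∫ t in (0 : ℝ)..s, |fluxDensity a B σ v t| :=
        abs_integral_le_integral_abs hs
    _ ≤ ∫ t in (0 : ℝ)..s, K * (B * t ^ (3 * a) + σ * t ^ (a - 1)) :=
        integral_mono_on hs (intervalIntegrable_fluxDensity ha hv 0 s).abs
          (((hint₁.const_mul B).add (hint₂.const_mul σ)).const_mul K)
          fun t ht => abs_fluxDensity_le ha hB hσ ht.1 (hK t ht)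
    _ = K * (B * s ^ (3 * a + 1) / (3 * a + 1) + σ * s ^ a / a) := by
        rw [intervalIntegral.integral_const_mul,
          integral_add (hint₁.const_mul B) (hint₂.const_mul σ), intervalIntegral.integral_const_mul,
          intervalIntegral.integral_const_mul, integral_zero_rpow (by linarith),
          integral_zero_rpow (by linarith), sub_add_cancel]
        ring

lemma abs_slope_le (ha : 0 < a) (hB : 0 ≤ B) (hσ : 0 ≤ σ) (hv : Continuous v) {s K : ℝ}
    (hs : 0 ≤ s) (hK : ∀ t ∈ Icc 0 s, |v t| ≤ K) :
    |slope a B σ v s| ≤ K * majorantDeriv a B σ s := by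
  have hK0 : 0 ≤ K := (abs_nonneg _).trans (hK 0 ⟨le_rfl, hs⟩)
  rcases hs.eq_or_lt with rfl | hs
  · simpa [slope, flux] using mul_nonneg hK0 (majorantDeriv_nonneg ha hB hσ le_rfl)
  have e₁ : s ^ (-a) * s ^ (3 * a + 1) = s ^ (2 * a + 1) := by
    rw [← Real.rpow_add hs]; ring_nf
  have e₂ : s ^ (-a) * s ^ a = 1 := by
    rw [← Real.rpow_add hs, neg_add_cancel, Real.rpow_zero]
  calc |slope a B σ v s| = s ^ (-a) * |flux a B σ v s| := by
        rw [slope, abs_mul, abs_of_nonneg (Real.rpow_nonneg hs.le _)]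
    _ ≤ s ^ (-a) * (K * (B * s ^ (3 * a + 1) / (3 * a + 1) + σ * s ^ a / a)) :=
        mul_le_mul_of_nonneg_left (abs_flux_le ha hB hσ hv hs.le hK) (Real.rpow_nonneg hs.le _)
    _ = K * (B * (s ^ (-a) * s ^ (3 * a + 1)) / (3 * a + 1) + σ * (s ^ (-a) * s ^ a) / a) := by
        ring
    _ = K * majorantDeriv a B σ s := by rw [e₁, e₂, mul_one, majorantDeriv]

lemma abs_volterra_le (ha : 0 < a) (ha1 : a < 1) (hB : 0 ≤ B) (hσ : 0 ≤ σ) (hv : Continuous v)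
    {M : ℝ → ℝ} (hM : Continuous M) {ζ : ℝ} (hζ : 0 ≤ ζ) (hMmono : MonotoneOn M (Icc 0 ζ))
    (hvM : ∀ t ∈ Icc 0 ζ, |v t| ≤ M t) :
    |volterra a B σ v ζ| ≤ ∫ s in (0 : ℝ)..ζ, M s * majorantDeriv a B σ s := by
  refine (abs_integral_le_integral_abs hζ).trans <| integral_mono_on hζ
    (intervalIntegrable_slope ha ha1 hv 0 ζ).abs
    ((hM.mul (continuous_majorantDeriv ha)).intervalIntegrable _ _) fun s hs => ?_
  refine abs_slope_le ha hB hσ hv hs.1 fun t ht => ?_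
  have htζ : t ∈ Icc 0 ζ := ⟨ht.1, ht.2.trans hs.2⟩
  exact (hvM t htζ).trans (hMmono htζ hs ht.2)

lemma abs_volterra_le_mul_majorant (ha : 0 < a) (ha1 : a < 1) (hB : 0 ≤ B) (hσ : 0 ≤ σ)
    (hv : Continuous v) {ζ K : ℝ} (hζ : 0 ≤ ζ) (hK : ∀ t ∈ Icc 0 ζ, |v t| ≤ K) :
    |volterra a B σ v ζ| ≤ K * majorant a B σ ζ := by
  refine (abs_volterra_le ha ha1 hB hσ hv continuous_const hζ monotoneOn_const hK).trans_eq ?_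
  rw [intervalIntegral.integral_const_mul,
    integral_eq_sub_of_hasDerivAt (fun s _ => hasDerivAt_majorant ha s)
      ((continuous_majorantDeriv ha).intervalIntegrable _ _), majorant_zero ha, sub_zero]

lemma abs_volterra_le_exp (ha : 0 < a) (ha1 : a < 1) (hB : 0 ≤ B) (hσ : 0 ≤ σ)
    (hv : Continuous v) {ζ C : ℝ} (hζ : 0 ≤ ζ)
    (hC : ∀ t ∈ Icc 0 ζ, |v t| ≤ C * Real.exp (2 * majorant a B σ t)) :
    |volterra a B σ v ζ| ≤ C * (Real.exp (2 * majorant a B σ ζ) - 1) / 2 := by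
  have hC0 : 0 ≤ C := by
    simpa [majorant_zero ha] using (abs_nonneg _).trans (hC 0 ⟨le_rfl, hζ⟩)
  have hmono : MonotoneOn (fun t => C * Real.exp (2 * majorant a B σ t)) (Icc 0 ζ) :=
    fun s hs t ht hst => mul_le_mul_of_nonneg_left (Real.exp_le_exp.2 (by
      linarith [monotoneOn_majorant ha hB hσ hs.1 ht.1 hst])) hC0
  have hprim : ∀ s, HasDerivAt (fun t => C * Real.exp (2 * majorant a B σ t) / 2)
      (C * Real.exp (2 * majorant a B σ s) * majorantDeriv a B σ s) s := fun s =>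
    ((((hasDerivAt_majorant ha s).const_mul 2).exp.const_mul C).div_const 2).congr_deriv (by ring)
  have hcont : Continuous fun t => C * Real.exp (2 * majorant a B σ t) :=
    continuous_const.mul ((continuous_const.mul (continuous_majorant ha)).rexp)
  refine (abs_volterra_le ha ha1 hB hσ hv hcont hζ hmono hC).trans_eq ?_
  rw [integral_eq_sub_of_hasDerivAt (fun s _ => hprim s)
    ((hcont.mul (continuous_majorantDeriv ha)).intervalIntegrable _ _), majorant_zero ha]
  simp only [mul_zero, Real.exp_zero]
  ring

def weight (a B σ ζ : ℝ) : ℝ := Real.exp (2 * majorant a B σ (max ζ 0))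

lemma continuous_weight (ha : 0 < a) : Continuous (weight a B σ) :=
  (continuous_const.mul ((continuous_majorant ha).comp (continuous_id.max continuous_const))).rexp

lemma weight_pos (ζ : ℝ) : 0 < weight a B σ ζ := Real.exp_pos _

lemma one_le_weight (ha : 0 < a) (hB : 0 ≤ B) (hσ : 0 ≤ σ) (ζ : ℝ) : 1 ≤ weight a B σ ζ :=
  Real.one_le_exp (by linarith [majorant_nonneg ha hB hσ (le_max_right ζ 0)])

lemma abs_volterra_weight_mul_le (ha : 0 < a) (ha1 : a < 1) (hB : 0 ≤ B) (hσ : 0 ≤ σ)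
    (hw : Continuous w) {C : ℝ} (hC : ∀ t, |w t| ≤ C) (ζ : ℝ) :
    |volterra a B σ (fun t => weight a B σ t * w t) (max ζ 0)|
      ≤ C * (weight a B σ ζ - 1) / 2 := by
  refine abs_volterra_le_exp ha ha1 hB hσ ((continuous_weight ha).mul hw) (le_max_right ζ 0)
    fun t ht => ?_
  rw [Pi.mul_apply, abs_mul, abs_of_pos (weight_pos t), weight, max_eq_left ht.1, mul_comm C]
  exact mul_le_mul_of_nonneg_left (hC t) (Real.exp_pos _).le

/-- Through `max ζ 0` this is constantly `1` on `ζ < 0`, so only values on `[0, ∞)` matter. -/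
def scaledPicard (ha : 0 < a) (ha1 : a < 1) (hB : 0 ≤ B) (hσ : 0 ≤ σ) (u : ℝ →ᵇ ℝ) :
    ℝ →ᵇ ℝ :=
  .ofNormedAddCommGroup
    (fun ζ => (1 + volterra a B σ (fun t => weight a B σ t * u t) (max ζ 0)) / weight a B σ ζ)
    ((((continuous_volterra ha ha1 ((continuous_weight ha).mul u.continuous)).comp
      (continuous_id.max continuous_const)).const_add 1).div (continuous_weight ha)
      fun ζ => (weight_pos ζ).ne')
    (1 + ‖u‖) fun ζ => by
      have hI := abs_volterra_weight_mul_le ha ha1 hB hσ u.continuous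
        (fun t => (Real.norm_eq_abs _).symm.trans_le (u.norm_coe_le_norm t)) ζ
      have hE := one_le_weight ha hB hσ ζ
      have hadd := abs_add_le 1 (volterra a B σ (fun t => weight a B σ t * u t) (max ζ 0))
      rw [abs_one] at hadd
      rw [Real.norm_eq_abs, abs_div, abs_of_pos (weight_pos ζ), div_le_iff₀ (weight_pos ζ)]
      nlinarith [norm_nonneg u]

lemma scaledPicard_apply (ha : 0 < a) (ha1 : a < 1) (hB : 0 ≤ B) (hσ : 0 ≤ σ) (u : ℝ →ᵇ ℝ)
    (ζ : ℝ) : scaledPicard ha ha1 hB hσ u ζ =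
      (1 + volterra a B σ (fun t => weight a B σ t * u t) (max ζ 0)) / weight a B σ ζ :=
  rfl

lemma contractingWith_scaledPicard (ha : 0 < a) (ha1 : a < 1) (hB : 0 ≤ B) (hσ : 0 ≤ σ) :
    ContractingWith (1 / 2) (scaledPicard ha ha1 hB hσ) := by
  refine ⟨by rw [← NNReal.coe_lt_coe]; norm_num, LipschitzWith.of_dist_le_mul fun u₁ u₂ => ?_⟩
  refine (BoundedContinuousFunction.dist_le (by positivity)).2 fun ζ => ?_
  have hsub : (fun t => weight a B σ t * u₁ t) - (fun t => weight a B σ t * u₂ t)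
      = fun t => weight a B σ t * (u₁ t - u₂ t) := by
    ext t; simp [mul_sub]
  have hI := abs_volterra_weight_mul_le (w := fun t => u₁ t - u₂ t) ha ha1 hB hσ
    (u₁.continuous.sub u₂.continuous)
    (fun t => (Real.dist_eq _ _).symm.trans_le
      (BoundedContinuousFunction.dist_coe_le_dist (f := u₁) (g := u₂) t)) ζ
  rw [← hsub, volterra_sub (v := fun t => weight a B σ t * u₁ t)
    (w := fun t => weight a B σ t * u₂ t) ha ha1 ((continuous_weight ha).mul u₁.continuous)
    ((continuous_weight ha).mul u₂.continuous)] at hI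
  have hE := one_le_weight ha hB hσ ζ
  rw [scaledPicard_apply, scaledPicard_apply, Real.dist_eq, div_sub_div_same,
    add_sub_add_left_eq_sub, abs_div, abs_of_pos (weight_pos ζ), div_le_iff₀ (weight_pos ζ)]
  push_cast
  nlinarith [dist_nonneg (x := u₁) (y := u₂)]

theorem exists_isVolterraSolution (ha : 0 < a) (ha1 : a < 1) (hB : 0 ≤ B) (hσ : 0 ≤ σ) :
    ∃ v, IsVolterraSolution a B σ v := by
  have hΦ := contractingWith_scaledPicard ha ha1 hB hσ
  set u := ContractingWith.fixedPoint _ hΦ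
  refine ⟨fun t => weight a B σ t * u t, (continuous_weight ha).mul u.continuous,
    fun ζ hζ => ?_⟩
  have hu := congrArg (· ζ) hΦ.fixedPoint_isFixedPt
  simp only [scaledPicard_apply, max_eq_left hζ] at hu
  rw [← hu, mul_div_cancel₀ _ (weight_pos ζ).ne']

def slopeDeriv (a B σ : ℝ) (v : ℝ → ℝ) (ζ : ℝ) : ℝ :=
  -a * ζ ^ (-a - 1) * flux a B σ v ζ + ζ ^ (-a) * fluxDensity a B σ v ζ

lemma hasDerivAt_flux (ha : 0 < a) (hv : Continuous v) {ζ : ℝ} (hζ : 0 < ζ) :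
    HasDerivAt (flux a B σ v) (fluxDensity a B σ v ζ) ζ :=
  integral_hasDerivAt_right (intervalIntegrable_fluxDensity ha hv 0 ζ)
    ((continuousOn_fluxDensity ha hv).stronglyMeasurableAtFilter isOpen_Ioi ζ hζ)
    ((continuousOn_fluxDensity ha hv).continuousAt (Ioi_mem_nhds hζ))

lemma hasDerivAt_volterra (ha : 0 < a) (ha1 : a < 1) (hv : Continuous v) {ζ : ℝ} (hζ : 0 < ζ) :
    HasDerivAt (volterra a B σ v) (slope a B σ v ζ) ζ :=
  integral_hasDerivAt_right (intervalIntegrable_slope ha ha1 hv 0 ζ)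
    ((continuousOn_slope ha hv).stronglyMeasurableAtFilter isOpen_Ioi ζ hζ)
    ((continuousOn_slope ha hv).continuousAt (Ioi_mem_nhds hζ))

lemma hasDerivAt_slope (ha : 0 < a) (hv : Continuous v) {ζ : ℝ} (hζ : 0 < ζ) :
    HasDerivAt (slope a B σ v) (slopeDeriv a B σ v ζ) ζ :=
  (Real.hasDerivAt_rpow_const (Or.inl hζ.ne')).mul (hasDerivAt_flux ha hv hζ)

lemma continuousOn_slopeDeriv (ha : 0 < a) (hv : Continuous v) :
    ContinuousOn (slopeDeriv a B σ v) (Ioi 0) := fun x hx =>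
  (((continuousAt_const.mul (Real.continuousAt_rpow_const x _ (Or.inl (ne_of_gt hx)))).mul
    (continuous_flux ha hv).continuousAt).add
    ((Real.continuousAt_rpow_const x _ (Or.inl (ne_of_gt hx))).mul
      ((continuousOn_fluxDensity ha hv).continuousAt (Ioi_mem_nhds hx)))).continuousWithinAt

lemma slopeDeriv_equation {ζ : ℝ} (hζ : 0 < ζ) :
    -ζ * slopeDeriv a B σ v ζ - slope a B σ v ζ * a + B * ζ ^ (2 * a + 1) * v ζ = σ * v ζ := by
  have e₁ : ζ * ζ ^ (-a - 1) = ζ ^ (-a) := by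
    rw [mul_comm, ← Real.rpow_add_one hζ.ne', sub_add_cancel]
  have e₂ : ζ * (ζ ^ (-a) * ζ ^ (a - 1)) = 1 := by
    rw [← Real.rpow_add hζ, show -a + (a - 1) = -1 by ring, Real.rpow_neg_one,
      mul_inv_cancel₀ hζ.ne']
  simp only [slopeDeriv, slope, fluxDensity]
  linear_combination (a * flux a B σ v ζ) * e₁ - ((B * ζ ^ (2 * a + 1) - σ) * v ζ) * e₂

lemma tendsto_slope_zero (ha : 0 < a) (hv : Continuous v) :
    Tendsto (slope a B σ v) (𝓝[>] 0) (𝓝 (-σ * v 0 / a)) := by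
  have h := tendsto_rpow_neg_mul_integral_rpow_mul ha
    (continuous_potential_mul (B := B) (σ := σ) ha hv)
  rwa [Real.zero_rpow (by linarith), mul_zero, zero_sub] at h

lemma flux_le_flux (ha : 0 < a) (hB : 0 ≤ B) (hv : Continuous v) {x y : ℝ} (hx : 0 ≤ x)
    (hxy : x ≤ y) (hσx : σ ≤ B * x ^ (2 * a + 1)) (hvxy : ∀ t ∈ Icc x y, 0 ≤ v t) :
    flux a B σ v x ≤ flux a B σ v y := by
  rw [flux, flux, ← integral_add_adjacent_intervals (intervalIntegrable_fluxDensity ha hv 0 x)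
    (intervalIntegrable_fluxDensity ha hv x y), le_add_iff_nonneg_right]
  refine integral_nonneg hxy fun t ht => ?_
  have hxt : x ^ (2 * a + 1) ≤ t ^ (2 * a + 1) := Real.rpow_le_rpow hx ht.1 (by linarith)
  exact mul_nonneg (Real.rpow_nonneg (hx.trans ht.1) _)
    (mul_nonneg (by nlinarith) (hvxy t ht))

lemma le_mul_rpow_of_two_mul_lt (ha : 0 < a) (hB : 0 < B) {z : ℝ} (hz : 0 < z)
    (hσz : 2 * σ * (3 * a + 1) < a * B * z ^ (2 * a + 1)) : σ ≤ B * z ^ (2 * a + 1) := by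
  have hP : 0 < B * z ^ (2 * a + 1) := mul_pos hB (Real.rpow_pos_of_pos hz _)
  nlinarith

lemma exists_threshold (ha : 0 < a) (hB : 0 < B) :
    ∃ z > 0, ∃ σbar > 0, ∀ σ ≤ σbar,
      majorant a B σ z ≤ 1 / 4 ∧ 2 * σ * (3 * a + 1) < a * B * z ^ (2 * a + 1) := by
  obtain ⟨z, hz, hGz⟩ : ∃ z > 0, majorant a B 0 z < 1 / 8 :=
    (((continuous_majorant ha).tendsto 0).eventually
      (gt_mem_nhds (by rw [majorant_zero ha]; norm_num))).exists_gt
  have hP : 0 < a * B * z ^ (2 * a + 1) := mul_pos (mul_pos ha hB) (Real.rpow_pos_of_pos hz _)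
  refine ⟨z, hz, min (a / (8 * z)) (a * B * z ^ (2 * a + 1) / (4 * (3 * a + 1))),
    lt_min (by positivity) (by positivity), fun σ hσbar => ⟨?_, ?_⟩⟩
  · have hσ₁ : σ * (8 * z) ≤ a := (le_div_iff₀ (by positivity)).1 (hσbar.trans (min_le_left _ _))
    have hsplit : majorant a B σ z = majorant a B 0 z + σ * z / a := by simp [majorant]
    have hlin : σ * z / a ≤ 1 / 8 := by rw [div_le_iff₀ ha]; linarith
    linarith
  · have hσ₂ := (le_div_iff₀ (by positivity)).1 (hσbar.trans (min_le_right _ _))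
    linarith

namespace IsVolterraSolution

lemma apply_zero (hv : IsVolterraSolution a B σ v) : v 0 = 1 := by
  simpa [volterra] using hv.eq_one_add 0 le_rfl

lemma hasDerivAt (hv : IsVolterraSolution a B σ v) (ha : 0 < a) (ha1 : a < 1) {ζ : ℝ}
    (hζ : 0 < ζ) : HasDerivAt v (slope a B σ v ζ) ζ := by
  refine ((hasDerivAt_volterra ha ha1 hv.continuous hζ).const_add 1).congr_of_eventuallyEq ?_
  filter_upwards [Ioi_mem_nhds hζ] with x hx using hv.eq_one_add x (le_of_lt hx)

theorem regSol {m : ℝ} (hm : 3 < m) (hv : IsVolterraSolution (1 / (m - 2)) B σ v) :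
    RegSol m B σ v := by
  set a := 1 / (m - 2) with ha_def
  have ha : 0 < a := one_div_pos.2 (by linarith)
  have ha1 : a < 1 := (div_lt_one (by linarith)).2 (by linarith)
  have hderiv : ∀ ζ, 0 < ζ → deriv v ζ = slope a B σ v ζ := fun ζ hζ =>
    (hv.hasDerivAt ha ha1 hζ).deriv
  refine ⟨contDiffOn_one_Ici_of_tendsto_deriv hv.continuous.continuousWithinAt
      (fun x hx => hv.hasDerivAt ha ha1 hx) (continuousOn_slope ha hv.continuous)
      (tendsto_slope_zero ha hv.continuous),
    contDiffOn_two_of_hasDerivAt isOpen_Ioi (fun x hx => hv.hasDerivAt ha ha1 hx)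
      (fun x hx => hasDerivAt_slope ha hv.continuous hx) (continuousOn_slopeDeriv ha hv.continuous),
    fun ζ hζ => ?_, hv.apply_zero⟩
  have hderiv₂ : deriv (deriv v) ζ = slopeDeriv a B σ v ζ := by
    refine ((hasDerivAt_slope ha hv.continuous hζ).congr_of_eventuallyEq ?_).deriv
    filter_upwards [Ioi_mem_nhds hζ] with x hx using hderiv x hx
  have hexp : m / (m - 2) = 2 * a + 1 := by
    have : m - 2 ≠ 0 := by linarith
    rw [ha_def]; field_simp; ring
  rw [hderiv₂, hderiv ζ hζ, hexp, div_eq_mul_one_div (slope a B σ v ζ), ← ha_def]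
  exact slopeDeriv_equation hζ

variable {z : ℝ}

lemma abs_sub_one_le (hv : IsVolterraSolution a B σ v) (ha : 0 < a) (ha1 : a < 1) (hB : 0 ≤ B)
    (hσ : 0 ≤ σ) (hz : 0 ≤ z) (hGz : majorant a B σ z ≤ 1 / 4) :
    ∀ ζ ∈ Icc 0 z, |v ζ - 1| ≤ 1 / 3 := by
  obtain ⟨t₀, ht₀, hmax⟩ := isCompact_Icc.exists_isMaxOn ⟨0, le_rfl, hz⟩
    hv.continuous.abs.continuousOn
  have hbound : ∀ ζ ∈ Icc 0 z, |v ζ - 1| ≤ |v t₀| / 4 := fun ζ hζ => by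
    rw [hv.eq_one_add ζ hζ.1, add_sub_cancel_left]
    refine (abs_volterra_le_mul_majorant ha ha1 hB hσ hv.continuous hζ.1
      fun t ht => hmax ⟨ht.1, ht.2.trans hζ.2⟩).trans ?_
    have hG := (monotoneOn_majorant ha hB hσ hζ.1 hz hζ.2).trans hGz
    nlinarith [abs_nonneg (v t₀)]
  have hK : |v t₀| ≤ 4 / 3 := by
    have h := abs_sub_abs_le_abs_sub (v t₀) 1
    rw [abs_one] at h
    linarith [hbound t₀ ht₀]
  exact fun ζ hζ => by linarith [hbound ζ hζ]

lemma flux_pos (hv : IsVolterraSolution a B σ v) (ha : 0 < a) (ha1 : a < 1) (hB : 0 < B)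
    (hσ : 0 ≤ σ) (hz : 0 < z) (hGz : majorant a B σ z ≤ 1 / 4)
    (hσz : 2 * σ * (3 * a + 1) < a * B * z ^ (2 * a + 1)) : 0 < flux a B σ v z := by
  have hint₁ : IntervalIntegrable (fun t : ℝ => t ^ (3 * a)) volume 0 z :=
    intervalIntegrable_rpow' (by linarith)
  have hint₂ : IntervalIntegrable (fun t : ℝ => t ^ (a - 1)) volume 0 z :=
    intervalIntegrable_rpow' (by linarith)
  have hlow : ∫ t in (0 : ℝ)..z, (2 / 3 * B * t ^ (3 * a) - 4 / 3 * σ * t ^ (a - 1))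
      ≤ flux a B σ v z := by
    refine integral_mono_on hz.le ((hint₁.const_mul _).sub (hint₂.const_mul _))
      (intervalIntegrable_fluxDensity ha hv.continuous 0 z) fun t ht => ?_
    have hvt := abs_le.1 (hv.abs_sub_one_le ha ha1 hB.le hσ hz.le hGz t ht)
    have hX := Real.rpow_nonneg ht.1 (a - 1)
    have hP := Real.rpow_nonneg ht.1 (2 * a + 1)
    have hXP : t ^ (a - 1) * t ^ (2 * a + 1) = t ^ (3 * a) := by
      rw [← Real.rpow_add' ht.1 (by linarith)]; ring_nf
    rw [fluxDensity, ← hXP]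
    nlinarith [mul_nonneg (mul_nonneg (mul_nonneg hB.le hX) hP) (by linarith : 0 ≤ v t - 2 / 3),
      mul_nonneg (mul_nonneg hσ hX) (by linarith : 0 ≤ 4 / 3 - v t)]
  have hval : ∫ t in (0 : ℝ)..z, (2 / 3 * B * t ^ (3 * a) - 4 / 3 * σ * t ^ (a - 1))
      = 2 / (3 * a * (3 * a + 1)) * z ^ a * (a * B * z ^ (2 * a + 1) - 2 * σ * (3 * a + 1)) := by
    rw [integral_sub (hint₁.const_mul _) (hint₂.const_mul _), intervalIntegral.integral_const_mul,
      intervalIntegral.integral_const_mul, integral_zero_rpow (by linarith),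
      integral_zero_rpow (by linarith), sub_add_cancel,
      show 3 * a + 1 = a + (2 * a + 1) by ring, Real.rpow_add hz]
    field_simp
    ring
  have hza := Real.rpow_pos_of_pos hz a
  have hval_pos :
      0 < 2 / (3 * a * (3 * a + 1)) * z ^ a * (a * B * z ^ (2 * a + 1) - 2 * σ * (3 * a + 1)) :=
    mul_pos (mul_pos (by positivity) hza) (by linarith)
  linarith

lemma pos_of_le (hv : IsVolterraSolution a B σ v) (ha : 0 < a) (ha1 : a < 1) (hB : 0 < B)
    (hσ : 0 ≤ σ) (hz : 0 < z) (hGz : majorant a B σ z ≤ 1 / 4)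
    (hσz : 2 * σ * (3 * a + 1) < a * B * z ^ (2 * a + 1)) : ∀ ζ, z ≤ ζ → 0 < v ζ := by
  have hvz : 0 < v z := by
    linarith [(abs_le.1 (hv.abs_sub_one_le ha ha1 hB.le hσ hz.le hGz z ⟨hz.le, le_rfl⟩)).1]
  refine pos_of_monotoneOn_while_pos hv.continuous hvz fun T _ hpos => ?_
  refine monotoneOn_of_deriv_nonneg (convex_Icc z T) hv.continuous.continuousOn
    (fun x hx => ?_) fun x hx => ?_ <;> rw [interior_Icc] at hx
  · exact (hv.hasDerivAt ha ha1 (hz.trans hx.1)).differentiableAt.differentiableWithinAt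
  rw [(hv.hasDerivAt ha ha1 (hz.trans hx.1)).deriv]
  have hflux := flux_le_flux ha hB.le hv.continuous hz.le hx.1.le
    (le_mul_rpow_of_two_mul_lt ha hB hz hσz) fun t ht => (hpos t ⟨ht.1, ht.2.trans_lt hx.2⟩).le
  exact mul_nonneg (Real.rpow_nonneg (hz.trans hx.1).le _)
    (by linarith [hv.flux_pos ha ha1 hB hσ hz hGz hσz])

lemma pos (hv : IsVolterraSolution a B σ v) (ha : 0 < a) (ha1 : a < 1) (hB : 0 < B)
    (hσ : 0 ≤ σ) (hz : 0 < z) (hGz : majorant a B σ z ≤ 1 / 4)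
    (hσz : 2 * σ * (3 * a + 1) < a * B * z ^ (2 * a + 1)) : ∀ ζ, 0 ≤ ζ → 0 < v ζ := fun ζ hζ => by
  rcases le_total ζ z with hζz | hzζ
  · linarith [(abs_le.1 (hv.abs_sub_one_le ha ha1 hB.le hσ hz.le hGz ζ ⟨hζ, hζz⟩)).1]
  · exact hv.pos_of_le ha ha1 hB hσ hz hGz hσz ζ hzζ

lemma tendsto_atTop (hv : IsVolterraSolution a B σ v) (ha : 0 < a) (ha1 : a < 1) (hB : 0 < B)
    (hσ : 0 ≤ σ) (hz : 0 < z) (hGz : majorant a B σ z ≤ 1 / 4)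
    (hσz : 2 * σ * (3 * a + 1) < a * B * z ^ (2 * a + 1)) : Tendsto v atTop atTop := by
  set c := flux a B σ v z
  have hc : 0 < c := hv.flux_pos ha ha1 hB hσ hz hGz hσz
  have hlow : ∀ Z, z ≤ Z →
      c / (1 - a) * Z ^ (1 - a) + (v z - c / (1 - a) * z ^ (1 - a)) ≤ v Z := fun Z hZ => by
    have hftc : ∫ s in z..Z, slope a B σ v s = v Z - v z :=
      integral_eq_sub_of_hasDerivAt (fun s hs => hv.hasDerivAt ha ha1
        (hz.trans_le (by rw [uIcc_of_le hZ] at hs; exact hs.1)))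
        (intervalIntegrable_slope ha ha1 hv.continuous z Z)
    have hmono : ∫ s in z..Z, c * s ^ (-a) ≤ ∫ s in z..Z, slope a B σ v s := by
      refine integral_mono_on hZ ((intervalIntegrable_rpow' (by linarith)).const_mul c)
        (intervalIntegrable_slope ha ha1 hv.continuous z Z) fun s hs => ?_
      rw [slope, mul_comm c]
      refine mul_le_mul_of_nonneg_left ?_ (Real.rpow_nonneg (hz.le.trans hs.1) _)
      exact flux_le_flux ha hB.le hv.continuous hz.le hs.1
        (le_mul_rpow_of_two_mul_lt ha hB hz hσz)
        fun t ht => (hv.pos_of_le ha ha1 hB hσ hz hGz hσz t ht.1).le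
    rw [intervalIntegral.integral_const_mul, integral_rpow (Or.inl (by linarith)),
      show -a + 1 = 1 - a by ring] at hmono
    have hsplit : c * ((Z ^ (1 - a) - z ^ (1 - a)) / (1 - a))
        = c / (1 - a) * Z ^ (1 - a) - c / (1 - a) * z ^ (1 - a) := by ring
    linarith
  refine tendsto_atTop_mono' atTop (eventually_atTop.2 ⟨z, hlow⟩) ?_
  exact tendsto_atTop_add_const_right _ _
    ((tendsto_rpow_atTop (by linarith)).const_mul_atTop (div_pos hc (by linarith)))

end IsVolterraSolution

end

end RegSol

theorem stmt9 (m B : ℝ) (hm : 3 < m) (hB : 0 < B) :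
    ∃ σbar : ℝ, 0 < σbar ∧ ∀ σ : ℝ, 0 ≤ σ → σ ≤ σbar →
      ∃ v : ℝ → ℝ, RegSol m B σ v ∧ (∀ ζ : ℝ, 0 ≤ ζ → 0 < v ζ) ∧
        Filter.Tendsto v Filter.atTop Filter.atTop := by
  have ha : 0 < 1 / (m - 2) := one_div_pos.2 (by linarith)
  have ha1 : 1 / (m - 2) < 1 := (div_lt_one (by linarith)).2 (by linarith)
  obtain ⟨z, hz, σbar, hσbar, hthreshold⟩ := RegSol.exists_threshold ha hB
  refine ⟨σbar, hσbar, fun σ hσ hσσbar => ?_⟩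
  obtain ⟨hGz, hσz⟩ := hthreshold σ hσσbar
  obtain ⟨v, hv⟩ := RegSol.exists_isVolterraSolution ha ha1 hB.le hσ
  exact ⟨v, hv.regSol hm, hv.pos ha ha1 hB hσ hz hGz hσz,
    hv.tendsto_atTop ha ha1 hB hσ hz hGz hσz⟩
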